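/- arXiv:2509.24382 — 3 statements merged into one kernel-verified Lean document; each statement's English description precedes it below -/
import Mathlib

section
/- If C^x ∈ ℝ^{n×n} and C^y ∈ ℝ^{m×m} are symmetric positive semidefinite, then for all T, T₀ ∈ ℝ^{n×m} one has the global majorization F(T) ≤ F(T₀) + ⟨2 C^x T₀ C^y, T − T₀⟩ + ‖C^x‖₂ ‖C^y‖₂ ‖T − T₀‖_F². -/
/-!
Write `T = T₀ + D`. Since `Cˣ` and `Cʸ` are symmetric, `⟨Cˣ D Cʸ, T₀⟩ = ⟨Cˣ T₀ Cʸ, D⟩`, so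
`F(T) = F(T₀) + 2⟨Cˣ T₀ Cʸ, D⟩ + F(D)` exactly. The remainder is bounded by Cauchy–Schwarz,
`F(D) ≤ ‖Cˣ D Cʸ‖_F ‖D‖_F`, together with `‖M X‖_F ≤ ‖M‖₂ ‖X‖_F`, which holds column by column,
and its transpose `‖X M‖_F ≤ ‖X‖_F ‖M‖₂`.
-/

open scoped BigOperators
open Matrix

noncomputable section

/-- Frobenius inner product of two real `n × m` matrices. -/
def finner {n m : ℕ} (A B : Matrix (Fin n) (Fin m) ℝ) : ℝ :=
  ∑ i, ∑ j, A i j * B i j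

/-- Frobenius norm. -/
def frobNorm {n m : ℕ} (A : Matrix (Fin n) (Fin m) ℝ) : ℝ :=
  Real.sqrt (finner A A)

/-- Operator (spectral) norm of a real matrix, as a linear map between
Euclidean spaces. -/
def l2OpNorm {k l : ℕ} (M : Matrix (Fin k) (Fin l) ℝ) : ℝ :=
  ‖(Matrix.toEuclideanLin M).toContinuousLinearMap‖

section Frobenius

variable {n m k : ℕ}

lemma finner_comm (A B : Matrix (Fin n) (Fin m) ℝ) : finner A B = finner B A := by
  simp only [finner, mul_comm]

lemma finner_add_left (A B C : Matrix (Fin n) (Fin m) ℝ) :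
    finner (A + B) C = finner A C + finner B C := by
  simp only [finner, Matrix.add_apply, add_mul, Finset.sum_add_distrib]

lemma finner_add_right (A B C : Matrix (Fin n) (Fin m) ℝ) :
    finner A (B + C) = finner A B + finner A C := by
  rw [finner_comm, finner_add_left, finner_comm B, finner_comm C]

lemma finner_eq_trace (A B : Matrix (Fin n) (Fin m) ℝ) : finner A B = (Aᵀ * B).trace := by
  simp only [finner, trace, diag_apply, mul_apply, transpose_apply]
  exact Finset.sum_comm

lemma finner_mul_left (A : Matrix (Fin k) (Fin n) ℝ) (X : Matrix (Fin n) (Fin m) ℝ)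
    (Y : Matrix (Fin k) (Fin m) ℝ) : finner (A * X) Y = finner X (Aᵀ * Y) := by
  rw [finner_eq_trace, finner_eq_trace, transpose_mul, Matrix.mul_assoc]

lemma finner_mul_right (X : Matrix (Fin n) (Fin k) ℝ) (B : Matrix (Fin k) (Fin m) ℝ)
    (Y : Matrix (Fin n) (Fin m) ℝ) : finner (X * B) Y = finner X (Y * Bᵀ) := by
  rw [finner_eq_trace, finner_eq_trace, transpose_mul, Matrix.mul_assoc, trace_mul_comm,
    Matrix.mul_assoc]

lemma finner_le_frobNorm_mul_frobNorm (A B : Matrix (Fin n) (Fin m) ℝ) :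
    finner A B ≤ frobNorm A * frobNorm B := by
  have := Real.sum_mul_le_sqrt_mul_sqrt Finset.univ (fun p : Fin n × Fin m => A p.1 p.2)
    (fun p => B p.1 p.2)
  simp only [Fintype.sum_prod_type] at this
  simpa only [finner, frobNorm, sq] using this

lemma frobNorm_nonneg (A : Matrix (Fin n) (Fin m) ℝ) : 0 ≤ frobNorm A :=
  Real.sqrt_nonneg _

lemma frobNorm_transpose (A : Matrix (Fin n) (Fin m) ℝ) : frobNorm Aᵀ = frobNorm A := by
  rw [frobNorm, frobNorm, finner_eq_trace, finner_eq_trace, transpose_transpose, trace_mul_comm]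

lemma finner_self_eq_sum_norm_sq (X : Matrix (Fin n) (Fin m) ℝ) :
    finner X X = ∑ j, ‖(WithLp.toLp 2 (Xᵀ j) : EuclideanSpace ℝ (Fin n))‖ ^ 2 := by
  simp only [finner, EuclideanSpace.real_norm_sq_eq, transpose_apply, ← sq]
  exact Finset.sum_comm

end Frobenius

section OperatorNorm

variable {n m k : ℕ}

lemma l2OpNorm_nonneg (M : Matrix (Fin k) (Fin n) ℝ) : 0 ≤ l2OpNorm M :=
  norm_nonneg _

lemma norm_toLp_mulVec_le (M : Matrix (Fin k) (Fin n) ℝ) (v : Fin n → ℝ) :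
    ‖(WithLp.toLp 2 (M *ᵥ v) : EuclideanSpace ℝ (Fin k))‖
      ≤ l2OpNorm M * ‖(WithLp.toLp 2 v : EuclideanSpace ℝ (Fin n))‖ :=
  (toEuclideanLin M).toContinuousLinearMap.le_opNorm (WithLp.toLp 2 v)

open scoped Matrix.Norms.L2Operator in
lemma l2OpNorm_transpose (M : Matrix (Fin k) (Fin n) ℝ) : l2OpNorm Mᵀ = l2OpNorm M := by
  rw [← conjTranspose_eq_transpose_of_trivial]
  exact l2_opNorm_conjTranspose M

lemma frobNorm_mul_le_left (M : Matrix (Fin k) (Fin n) ℝ) (X : Matrix (Fin n) (Fin m) ℝ) :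
    frobNorm (M * X) ≤ l2OpNorm M * frobNorm X := by
  have hsq : finner (M * X) (M * X) ≤ l2OpNorm M ^ 2 * finner X X := by
    rw [finner_self_eq_sum_norm_sq, finner_self_eq_sum_norm_sq, Finset.mul_sum]
    refine Finset.sum_le_sum fun j _ => ?_
    rw [← mul_pow]
    exact pow_le_pow_left₀ (norm_nonneg _) (norm_toLp_mulVec_le M (Xᵀ j)) 2
  rw [frobNorm, frobNorm, ← Real.sqrt_sq (l2OpNorm_nonneg M), ← Real.sqrt_mul (sq_nonneg _)]
  exact Real.sqrt_le_sqrt hsq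

lemma frobNorm_mul_le_right (X : Matrix (Fin n) (Fin k) ℝ) (M : Matrix (Fin k) (Fin m) ℝ) :
    frobNorm (X * M) ≤ frobNorm X * l2OpNorm M := by
  rw [← frobNorm_transpose, transpose_mul, ← frobNorm_transpose X, ← l2OpNorm_transpose M,
    mul_comm]
  exact frobNorm_mul_le_left Mᵀ Xᵀ

lemma finner_mul_mul_self_le (A : Matrix (Fin n) (Fin n) ℝ) (B : Matrix (Fin m) (Fin m) ℝ)
    (X : Matrix (Fin n) (Fin m) ℝ) :
    finner (A * X * B) X ≤ l2OpNorm A * l2OpNorm B * frobNorm X ^ 2 :=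
  calc finner (A * X * B) X ≤ frobNorm (A * (X * B)) * frobNorm X := by
        rw [← Matrix.mul_assoc]; exact finner_le_frobNorm_mul_frobNorm _ _
    _ ≤ l2OpNorm A * (frobNorm X * l2OpNorm B) * frobNorm X := by
        gcongr
        · exact frobNorm_nonneg X
        · exact (frobNorm_mul_le_left A _).trans
            (mul_le_mul_of_nonneg_left (frobNorm_mul_le_right X B) (l2OpNorm_nonneg A))
    _ = l2OpNorm A * l2OpNorm B * frobNorm X ^ 2 := by ring

end OperatorNorm

section QuadraticForm

variable {n m : ℕ} {A : Matrix (Fin n) (Fin n) ℝ} {B : Matrix (Fin m) (Fin m) ℝ}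

lemma finner_mul_mul_comm (hA : A.IsSymm) (hB : B.IsSymm) (X Y : Matrix (Fin n) (Fin m) ℝ) :
    finner (A * X * B) Y = finner (A * Y * B) X := by
  rw [finner_mul_right, finner_mul_left, hA.eq, hB.eq, finner_comm, Matrix.mul_assoc]

lemma finner_mul_add_mul_add (hA : A.IsSymm) (hB : B.IsSymm) (X D : Matrix (Fin n) (Fin m) ℝ) :
    finner (A * (X + D) * B) (X + D)
      = finner (A * X * B) X + 2 * finner (A * X * B) D + finner (A * D * B) D := by
  rw [Matrix.mul_add, Matrix.add_mul, finner_add_left, finner_add_right, finner_add_right,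
    finner_mul_mul_comm hA hB D X]
  ring

end QuadraticForm

/-- global quadratic majorization of the fused GW quadratic form for
symmetric PSD `Cˣ, Cʸ`. -/
theorem stmt3 {n m : ℕ} (Cx : Matrix (Fin n) (Fin n) ℝ) (Cy : Matrix (Fin m) (Fin m) ℝ)
    (hCx : Cx.PosSemidef) (hCy : Cy.PosSemidef)
    (F : Matrix (Fin n) (Fin m) ℝ → ℝ) (hF : ∀ T, F T = finner (Cx * T * Cy) T)
    (T T₀ : Matrix (Fin n) (Fin m) ℝ) :
    F T ≤ F T₀ + finner (2 • (Cx * T₀ * Cy)) (T - T₀)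
        + l2OpNorm Cx * l2OpNorm Cy * frobNorm (T - T₀) ^ 2 := by
  have hexpand := finner_mul_add_mul_add (isHermitian_iff_isSymm.mp hCx.isHermitian)
    (isHermitian_iff_isSymm.mp hCy.isHermitian) T₀ (T - T₀)
  rw [add_sub_cancel] at hexpand
  rw [hF, hF, hexpand, two_smul, finner_add_left]
  linarith [finner_mul_mul_self_le Cx Cy (T - T₀)]
end
end

section
/- Let D ∈ ℝ^{n×m}, let S ∈ ℝ^{n×m}, let Q ∈ ℝ^{n×m} have strictly positive entries, let α ∈ ℝ^n and β ∈ ℝ^m have strictly positive entries, and let λ₂ > 0 and τ ≥ 0. Then for every c ∈ ℝ, the sublevel set {T ∈ ℝ^{n×m} : T entrywise nonnegative and Ψ(T) ≤ c} of the inner objective Ψ(T) = ⟨D, T⟩ − ⟨S, T⟩ + λ₂ KL(T‖Q) + τ (KL(T𝟙_m‖α) + KL(T^⊤𝟙_n‖β)) is bounded (Ψ is coercive on the nonnegative orthant). -/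
open scoped BigOperators
open Matrix

noncomputable section


lemma key_slog (s : ℝ) (hs : 0 ≤ s) : s - 1 ≤ s * Real.log s := by
  rcases eq_or_lt_of_le hs with h | h
  · simp [← h]
  · have h1 := Real.log_le_sub_one_of_pos (inv_pos.mpr h)
    rw [Real.log_inv] at h1
    have h2 : s * (-Real.log s) ≤ s * (s⁻¹ - 1) := mul_le_mul_of_nonneg_left h1 hs
    have h3 : s * s⁻¹ = 1 := mul_inv_cancel₀ (ne_of_gt h)
    nlinarith

lemma klterm_nonneg (r a : ℝ) (hr : 0 ≤ r) (ha : 0 < a) :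
    0 ≤ r * Real.log (r / a) - r + a := by
  have hs : 0 ≤ r / a := div_nonneg hr ha.le
  have h := key_slog (r / a) hs
  have h2 : a * (r / a - 1) ≤ a * (r / a * Real.log (r / a)) :=
    mul_le_mul_of_nonneg_left h ha.le
  have h3 : a * (r / a) = r := by field_simp
  have h4 : a * (r / a * Real.log (r / a)) = r * Real.log (r / a) := by
    rw [← mul_assoc, h3]
  nlinarith

lemma lb_entropy (lam b t : ℝ) (hlam : 0 < lam) (ht : 0 ≤ t) :
    -(lam * Real.exp (-b / lam)) ≤ lam * (t * Real.log t) + b * t := by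
  set u := t * Real.exp (b / lam) with hu
  have hu0 : 0 ≤ u := mul_nonneg ht (Real.exp_pos _).le
  have hk := key_slog u hu0
  have hepos : (0:ℝ) < lam * Real.exp (-b / lam) := by positivity
  have hid : lam * Real.exp (-b / lam) * (u * Real.log u)
      = lam * (t * Real.log t) + b * t := by
    rcases eq_or_lt_of_le ht with h | h
    · simp [hu, ← h]
    · have hlogu : Real.log u = Real.log t + b / lam := by
        rw [hu, Real.log_mul (ne_of_gt h) (Real.exp_ne_zero _), Real.log_exp]
      have h1 : Real.exp (-b / lam) * Real.exp (b / lam) = 1 := by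
        rw [← Real.exp_add]; ring_nf; exact Real.exp_zero
      have hl : lam * (b / lam) = b := by field_simp
      calc lam * Real.exp (-b / lam) * (u * Real.log u)
          = (Real.exp (-b / lam) * Real.exp (b / lam)) *
              (lam * (t * Real.log t) + (lam * (b / lam)) * t) := by
            rw [hlogu, hu]; ring
        _ = lam * (t * Real.log t) + b * t := by rw [h1, hl]; ring
  have h4 : -(1:ℝ) ≤ u * Real.log u := by linarith
  nlinarith [mul_le_mul_of_nonneg_left h4 hepos.le]

/-- Generalized KL divergence between matrices (with the convention `0 log 0 = 0`,
which holds definitionally here since `Real.log 0 = 0`). -/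
def klMat {n m : ℕ} (T Q : Matrix (Fin n) (Fin m) ℝ) : ℝ :=
  ∑ i, ∑ j, (T i j * Real.log (T i j / Q i j) - T i j + Q i j)

/-- Generalized KL divergence between vectors. -/
def klVec {k : ℕ} (r a : Fin k → ℝ) : ℝ :=
  ∑ i, (r i * Real.log (r i / a i) - r i + a i)

/-- Vector of row sums `T𝟙_m`. -/
def rowSums {n m : ℕ} (T : Matrix (Fin n) (Fin m) ℝ) : Fin n → ℝ :=
  fun i => ∑ j, T i j

/-- Vector of column sums `Tᵀ𝟙_n`. -/
def colSums {n m : ℕ} (T : Matrix (Fin n) (Fin m) ℝ) : Fin m → ℝ :=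
  fun j => ∑ i, T i j

/-- every sublevel set of the inner objective `Ψ` on the nonnegative
orthant is bounded (coercivity). -/
theorem stmt12 {n m : ℕ} (D S : Matrix (Fin n) (Fin m) ℝ)
    (Q : Matrix (Fin n) (Fin m) ℝ) (hQ : ∀ i j, 0 < Q i j)
    (α : Fin n → ℝ) (β : Fin m → ℝ) (hα : ∀ i, 0 < α i) (hβ : ∀ j, 0 < β j)
    (lam2 τ : ℝ) (hlam2 : 0 < lam2) (hτ : 0 ≤ τ)
    (Ψ : Matrix (Fin n) (Fin m) ℝ → ℝ)
    (hΨ : ∀ T, Ψ T = finner D T - finner S T + lam2 * klMat T Q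
        + τ * (klVec (rowSums T) α + klVec (colSums T) β))
    (c : ℝ) :
    ∃ R : ℝ, ∀ T : Matrix (Fin n) (Fin m) ℝ,
      (∀ i j, 0 ≤ T i j) → Ψ T ≤ c → ∀ i j, |T i j| ≤ R := by
  classical
  set b : Fin n → Fin m → ℝ :=
    fun i j => (D i j - S i j) - lam2 - lam2 * Real.log (Q i j) with hb
  set E : Fin n → Fin m → ℝ :=
    fun i j => lam2 * Real.exp (|b i j| / lam2) with hE
  set Bsum : ℝ := ∑ i, ∑ j, |b i j| with hBsum
  set K : ℝ := ∑ i, ∑ j, E i j with hK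
  set f : Fin n → Fin m → ℝ → ℝ :=
    fun i j t => lam2 * (t * Real.log t) + b i j * t + lam2 * Q i j with hf
  -- uniform bound on |b i j|
  have hBle : ∀ i j, |b i j| ≤ Bsum := by
    intro i j
    have h1 : |b i j| ≤ ∑ j', |b i j'| :=
      Finset.single_le_sum (f := fun j' => |b i j'|)
        (fun j' _ => abs_nonneg _) (Finset.mem_univ j)
    have h2 : (∑ j', |b i j'|) ≤ Bsum :=
      Finset.single_le_sum (f := fun i' => ∑ j', |b i' j'|)
        (fun i' _ => Finset.sum_nonneg fun j' _ => abs_nonneg _) (Finset.mem_univ i)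
    linarith
  -- entrywise lower bound on f
  have hflb : ∀ i j t, 0 ≤ t → -(E i j) ≤ f i j t := by
    intro i j t ht
    have h1 := lb_entropy lam2 (b i j) t hlam2 ht
    have h2 : Real.exp (-b i j / lam2) ≤ Real.exp (|b i j| / lam2) :=
      Real.exp_le_exp.mpr (div_le_div_of_nonneg_right (neg_le_abs _) hlam2.le)
    have h3 : 0 ≤ lam2 * Q i j := mul_nonneg hlam2.le (hQ i j).le
    have h4 : lam2 * Real.exp (-b i j / lam2) ≤ E i j :=
      mul_le_mul_of_nonneg_left h2 hlam2.le
    show -E i j ≤ lam2 * (t * Real.log t) + b i j * t + lam2 * Q i j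
    calc -E i j ≤ -(lam2 * Real.exp (-b i j / lam2)) := neg_le_neg h4
      _ ≤ lam2 * (t * Real.log t) + b i j * t := h1
      _ ≤ lam2 * (t * Real.log t) + b i j * t + lam2 * Q i j :=
          le_add_of_nonneg_right h3
  have hEnn : ∀ i j, (0:ℝ) ≤ E i j := fun i j => by positivity
  have hKnn : 0 ≤ K := Finset.sum_nonneg fun i _ => Finset.sum_nonneg fun j _ => hEnn i j
  refine ⟨max 1 (Real.exp ((Bsum + |c| + K + 1) / lam2)), ?_⟩
  intro T hT hc i₀ j₀
  have ht0 : 0 ≤ T i₀ j₀ := hT _ _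
  rw [abs_of_nonneg ht0]
  by_contra hlt
  push_neg at hlt
  set R : ℝ := max 1 (Real.exp ((Bsum + |c| + K + 1) / lam2)) with hR
  set t := T i₀ j₀ with htdef
  have ht1 : 1 ≤ t := le_of_lt (lt_of_le_of_lt (le_max_left _ _) hlt)
  have htpos : 0 < t := lt_of_lt_of_le one_pos ht1
  -- rewrite linear + matrix-KL part as ∑∑ f
  have hsum : finner D T - finner S T + lam2 * klMat T Q
      = ∑ i, ∑ j, f i j (T i j) := by
    unfold finner klMat
    rw [Finset.mul_sum, ← Finset.sum_sub_distrib, ← Finset.sum_add_distrib]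
    refine Finset.sum_congr rfl fun i _ => ?_
    rw [Finset.mul_sum, ← Finset.sum_sub_distrib, ← Finset.sum_add_distrib]
    refine Finset.sum_congr rfl fun j _ => ?_
    simp only [hf, hb]
    rcases eq_or_lt_of_le (hT i j) with h | h
    · simp [← h]
    · rw [Real.log_div (ne_of_gt h) (ne_of_gt (hQ i j))]
      ring
  -- nonnegativity of the marginal KL terms
  have hrow : 0 ≤ klVec (rowSums T) α :=
    Finset.sum_nonneg fun i _ =>
      klterm_nonneg _ _ (Finset.sum_nonneg fun j _ => hT i j) (hα i)
  have hcol : 0 ≤ klVec (colSums T) β :=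
    Finset.sum_nonneg fun j _ =>
      klterm_nonneg _ _ (Finset.sum_nonneg fun i _ => hT i j) (hβ j)
  have hτnn : 0 ≤ τ * (klVec (rowSums T) α + klVec (colSums T) β) :=
    mul_nonneg hτ (add_nonneg hrow hcol)
  have hΨlb : ∑ i, ∑ j, f i j (T i j) ≤ c := by
    have := hΨ T
    rw [hsum] at this
    linarith [hc, this.symm.le, hτnn, this.le]
  -- single term lower bound of the double sum
  have hg : ∀ i j, 0 ≤ f i j (T i j) + E i j := by
    intro i j; have := hflb i j (T i j) (hT i j); linarith
  have hsingle : f i₀ j₀ t - K ≤ ∑ i, ∑ j, f i j (T i j) := by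
    have h1 : f i₀ j₀ t + E i₀ j₀ ≤ ∑ j, (f i₀ j (T i₀ j) + E i₀ j) :=
      Finset.single_le_sum (fun j _ => hg i₀ j) (Finset.mem_univ j₀)
    have h2 : (∑ j, (f i₀ j (T i₀ j) + E i₀ j))
        ≤ ∑ i, ∑ j, (f i j (T i j) + E i j) :=
      Finset.single_le_sum (f := fun i => ∑ j, (f i j (T i j) + E i j))
        (fun i _ => Finset.sum_nonneg fun j _ => hg i j) (Finset.mem_univ i₀)
    have h3 : ∑ i, ∑ j, (f i j (T i j) + E i j)
        = (∑ i, ∑ j, f i j (T i j)) + K := by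
      rw [hK, ← Finset.sum_add_distrib]
      refine Finset.sum_congr rfl fun i _ => ?_
      rw [← Finset.sum_add_distrib]
    have := hEnn i₀ j₀
    linarith
  -- lower bound on f i₀ j₀ t that contradicts hΨlb
  have hlog : Bsum + |c| + K + 1 < lam2 * Real.log t := by
    have hRe : Real.exp ((Bsum + |c| + K + 1) / lam2) < t :=
      lt_of_le_of_lt (le_max_right _ _) hlt
    have := Real.lt_log_iff_exp_lt htpos |>.mpr hRe
    calc Bsum + |c| + K + 1 = lam2 * ((Bsum + |c| + K + 1) / lam2) := by field_simp
      _ < lam2 * Real.log t := by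
          exact mul_lt_mul_of_pos_left this hlam2
  have hfbig : |c| + K + 1 ≤ f i₀ j₀ t := by
    have hbt : -(Bsum * t) ≤ b i₀ j₀ * t := by
      have h1 : -Bsum ≤ b i₀ j₀ := by
        have := hBle i₀ j₀; have := neg_abs_le (b i₀ j₀); linarith
      nlinarith
    have hq : 0 ≤ lam2 * Q i₀ j₀ := mul_nonneg hlam2.le (hQ i₀ j₀).le
    have hmul : t * (|c| + K + 1) ≤ t * (lam2 * Real.log t - Bsum) := by
      apply mul_le_mul_of_nonneg_left _ htpos.le
      linarith
    have h1t : (|c| + K + 1) * 1 ≤ (|c| + K + 1) * t := by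
      apply mul_le_mul_of_nonneg_left ht1
      have := abs_nonneg c
      linarith
    simp only [hf]
    nlinarith
  have : c < f i₀ j₀ t - K := by
    have : c ≤ |c| := le_abs_self c
    linarith
  linarith
end
end

section
/- Let D ∈ ℝ^{n×m}, let S ∈ ℝ^{n×m}, let Q ∈ ℝ^{n×m} have strictly positive entries, let α ∈ ℝ^n and β ∈ ℝ^m have strictly positive entries, and let λ₂ > 0 and τ ≥ 0. Then the inner objective Ψ(T) = ⟨D, T⟩ − ⟨S, T⟩ + λ₂ KL(T‖Q) + τ (KL(T𝟙_m‖α) + KL(T^⊤𝟙_n‖β)) attains its minimum over the set of entrywise nonnegative real n×m matrices at exactly one point; i.e., a minimizer exists and is unique. -/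
open scoped BigOperators
open Matrix

noncomputable section

namespace Stmt13Aux

/-- tangent bound: `x log x ≥ (t+1)x - exp t` for `x ≥ 0`. -/
lemma mul_log_tangent {x : ℝ} (hx : 0 ≤ x) (t : ℝ) :
    (t + 1) * x - Real.exp t ≤ x * Real.log x := by
  rcases eq_or_lt_of_le hx with h | h
  · rw [← h]; simp; positivity
  · have hpos : 0 < x * Real.exp (-t) := by positivity
    have h1 := Real.one_sub_inv_le_log_of_pos hpos
    rw [Real.log_mul h.ne' (Real.exp_ne_zero _), Real.log_exp] at h1
    have h2 : x * (1 - (x * Real.exp (-t))⁻¹) ≤ x * (Real.log x + -t) :=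
      mul_le_mul_of_nonneg_left h1 hx
    have h3 : x * (x * Real.exp (-t))⁻¹ = Real.exp t := by
      rw [mul_inv, ← mul_assoc, mul_inv_cancel₀ h.ne', one_mul, ← Real.exp_neg, neg_neg]
    nlinarith [h2, h3]

/-- splitting the log of a quotient under multiplication by `x ≥ 0`. -/
lemma mul_log_div {x q : ℝ} (hx : 0 ≤ x) (hq : 0 < q) :
    x * Real.log (x / q) = x * Real.log x - x * Real.log q := by
  rcases eq_or_lt_of_le hx with h | h
  · rw [← h]; simp
  · rw [Real.log_div h.ne' hq.ne']; ring

/-- per-entry coercive lower bound. -/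
lemma entry_lower (a q lam2 : ℝ) (hq : 0 < q) (hl : 0 < lam2) :
    ∃ C : ℝ, ∀ x : ℝ, 0 ≤ x →
      x - C ≤ a * x + lam2 * (x * Real.log (x / q) - x + q) := by
  set t : ℝ := (1 - a) / lam2 + Real.log q with ht
  refine ⟨lam2 * Real.exp t - lam2 * q, fun x hx => ?_⟩
  rw [mul_log_div hx hq]
  have h1 := mul_log_tangent hx t
  have h2 : lam2 * ((t + 1) * x - Real.exp t) ≤ lam2 * (x * Real.log x) :=
    mul_le_mul_of_nonneg_left h1 hl.le
  have h3 : lam2 * ((1 - a) / lam2) = 1 - a := by field_simp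
  have hlt : lam2 * t = (1 - a) + lam2 * Real.log q := by
    rw [ht, mul_add, h3]
  have h6 : lam2 * ((t + 1) * x - Real.exp t) =
      (1 - a) * x + lam2 * Real.log q * x + lam2 * x - lam2 * Real.exp t := by
    linear_combination x * hlt
  nlinarith [h2, h6]

/-- nonnegativity of a single KL summand. -/
lemma kl_term_nonneg {x q : ℝ} (hx : 0 ≤ x) (hq : 0 < q) :
    0 ≤ x * Real.log (x / q) - x + q := by
  rcases eq_or_lt_of_le hx with h | h
  · rw [← h]; simp; linarith
  · have hpos : 0 < x / q := by positivity
    have h1 := Real.one_sub_inv_le_log_of_pos hpos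
    have h2 : x * (1 - (x / q)⁻¹) ≤ x * Real.log (x / q) :=
      mul_le_mul_of_nonneg_left h1 hx
    have h3 : x * (x / q)⁻¹ = q := by field_simp
    nlinarith [h2, h3]

lemma klVec_nonneg {k : ℕ} {r a : Fin k → ℝ} (hr : ∀ i, 0 ≤ r i) (ha : ∀ i, 0 < a i) :
    0 ≤ klVec r a :=
  Finset.sum_nonneg fun i _ => kl_term_nonneg (hr i) (ha i)

/-- midpoint convexity of `x log x` on `[0, ∞)`. -/
lemma mul_log_mid {x y : ℝ} (hx : 0 ≤ x) (hy : 0 ≤ y) :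
    ((x + y) / 2) * Real.log ((x + y) / 2) ≤ (x * Real.log x + y * Real.log y) / 2 := by
  have h := Real.convexOn_mul_log.2 (Set.mem_Ici.2 hx) (Set.mem_Ici.2 hy)
    (by norm_num : (0:ℝ) ≤ 1/2) (by norm_num : (0:ℝ) ≤ 1/2) (by norm_num)
  simp only [smul_eq_mul] at h
  calc ((x + y) / 2) * Real.log ((x + y) / 2)
      = (1/2 * x + 1/2 * y) * Real.log (1/2 * x + 1/2 * y) := by ring_nf
    _ ≤ 1/2 * (x * Real.log x) + 1/2 * (y * Real.log y) := h
    _ = (x * Real.log x + y * Real.log y) / 2 := by ring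

/-- strict midpoint convexity of `x log x` on `[0, ∞)`. -/
lemma mul_log_mid_lt {x y : ℝ} (hx : 0 ≤ x) (hy : 0 ≤ y) (hxy : x ≠ y) :
    ((x + y) / 2) * Real.log ((x + y) / 2) < (x * Real.log x + y * Real.log y) / 2 := by
  have h := Real.strictConvexOn_mul_log.2 (Set.mem_Ici.2 hx) (Set.mem_Ici.2 hy) hxy
    (by norm_num : (0:ℝ) < 1/2) (by norm_num : (0:ℝ) < 1/2) (by norm_num)
  simp only [smul_eq_mul] at h
  calc ((x + y) / 2) * Real.log ((x + y) / 2)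
      = (1/2 * x + 1/2 * y) * Real.log (1/2 * x + 1/2 * y) := by ring_nf
    _ < 1/2 * (x * Real.log x) + 1/2 * (y * Real.log y) := h
    _ = (x * Real.log x + y * Real.log y) / 2 := by ring

/-- midpoint convexity of a KL summand. -/
lemma kl_term_mid {x y q : ℝ} (hx : 0 ≤ x) (hy : 0 ≤ y) (hq : 0 < q) :
    ((x + y) / 2) * Real.log (((x + y) / 2) / q) - (x + y) / 2 + q ≤
      ((x * Real.log (x / q) - x + q) + (y * Real.log (y / q) - y + q)) / 2 := by
  have hm : (0:ℝ) ≤ (x + y) / 2 := by linarith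
  rw [mul_log_div hm hq, mul_log_div hx hq, mul_log_div hy hq]
  have := mul_log_mid hx hy
  nlinarith [this]

lemma kl_term_mid_lt {x y q : ℝ} (hx : 0 ≤ x) (hy : 0 ≤ y) (hq : 0 < q) (hxy : x ≠ y) :
    ((x + y) / 2) * Real.log (((x + y) / 2) / q) - (x + y) / 2 + q <
      ((x * Real.log (x / q) - x + q) + (y * Real.log (y / q) - y + q)) / 2 := by
  have hm : (0:ℝ) ≤ (x + y) / 2 := by linarith
  rw [mul_log_div hm hq, mul_log_div hx hq, mul_log_div hy hq]
  have := mul_log_mid_lt hx hy hxy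
  nlinarith [this]

/-- averaging identity for double sums. -/
lemma sum2_avg {n m : ℕ} (f g : Fin n → Fin m → ℝ) :
    ((∑ i, ∑ j, f i j) + (∑ i, ∑ j, g i j)) / 2 = ∑ i, ∑ j, (f i j + g i j) / 2 := by
  rw [← Finset.sum_add_distrib, Finset.sum_div]
  refine Finset.sum_congr rfl fun i _ => ?_
  rw [← Finset.sum_add_distrib, Finset.sum_div]

/-- averaging identity for single sums. -/
lemma sum1_avg {k : ℕ} (f g : Fin k → ℝ) :
    ((∑ i, f i) + (∑ i, g i)) / 2 = ∑ i, (f i + g i) / 2 := by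
  rw [← Finset.sum_add_distrib, Finset.sum_div]

/-- continuity of `x ↦ x log (x/q)` for `q > 0`. -/
lemma continuous_mul_log_div (q : ℝ) (hq : 0 < q) :
    Continuous fun x : ℝ => x * Real.log (x / q) := by
  have heq : (fun x : ℝ => x * Real.log (x / q)) =
      fun x : ℝ => q * ((x / q) * Real.log (x / q)) := by
    funext x; field_simp
  rw [heq]
  exact continuous_const.mul (Real.continuous_mul_log.comp (continuous_id.div_const q))

end Stmt13Aux

open Stmt13Aux

/-- the inner objective `Ψ` attains its minimum over the entrywise
nonnegative matrices at exactly one point. -/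
theorem stmt13 {n m : ℕ} (D S : Matrix (Fin n) (Fin m) ℝ)
    (Q : Matrix (Fin n) (Fin m) ℝ) (hQ : ∀ i j, 0 < Q i j)
    (α : Fin n → ℝ) (β : Fin m → ℝ) (hα : ∀ i, 0 < α i) (hβ : ∀ j, 0 < β j)
    (lam2 τ : ℝ) (hlam2 : 0 < lam2) (hτ : 0 ≤ τ)
    (Ψ : Matrix (Fin n) (Fin m) ℝ → ℝ)
    (hΨ : ∀ T, Ψ T = finner D T - finner S T + lam2 * klMat T Q
        + τ * (klVec (rowSums T) α + klVec (colSums T) β)) :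
    ∃! T₀ : Matrix (Fin n) (Fin m) ℝ,
      (∀ i j, 0 ≤ T₀ i j) ∧
      ∀ T : Matrix (Fin n) (Fin m) ℝ, (∀ i j, 0 ≤ T i j) → Ψ T₀ ≤ Ψ T := by
  -- continuity of Ψ
  have happ : ∀ (i : Fin n) (j : Fin m),
      Continuous fun T : Matrix (Fin n) (Fin m) ℝ => T i j := fun i j =>
    (continuous_apply j).comp (continuous_apply i)
  have hcont : Continuous Ψ := by
    have : Ψ = fun T => finner D T - finner S T + lam2 * klMat T Q
        + τ * (klVec (rowSums T) α + klVec (colSums T) β) := funext hΨ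
    rw [this]
    have hfin : ∀ A : Matrix (Fin n) (Fin m) ℝ,
        Continuous fun T : Matrix (Fin n) (Fin m) ℝ => finner A T := by
      intro A
      exact continuous_finset_sum _ fun i _ => continuous_finset_sum _ fun j _ =>
        continuous_const.mul (happ i j)
    have hkl : Continuous fun T : Matrix (Fin n) (Fin m) ℝ => klMat T Q := by
      refine continuous_finset_sum _ fun i _ => continuous_finset_sum _ fun j _ => ?_
      exact (((continuous_mul_log_div (Q i j) (hQ i j)).comp (happ i j)).sub
        (happ i j)).add continuous_const
    have hrs : ∀ i : Fin n, Continuous fun T : Matrix (Fin n) (Fin m) ℝ => rowSums T i := by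
      intro i; exact continuous_finset_sum _ fun j _ => happ i j
    have hcs : ∀ j : Fin m, Continuous fun T : Matrix (Fin n) (Fin m) ℝ => colSums T j := by
      intro j; exact continuous_finset_sum _ fun i _ => happ i j
    have hklr : Continuous fun T : Matrix (Fin n) (Fin m) ℝ => klVec (rowSums T) α := by
      refine continuous_finset_sum _ fun i _ => ?_
      exact (((continuous_mul_log_div (α i) (hα i)).comp (hrs i)).sub (hrs i)).add
        continuous_const
    have hklc : Continuous fun T : Matrix (Fin n) (Fin m) ℝ => klVec (colSums T) β := by
      refine continuous_finset_sum _ fun j _ => ?_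
      exact (((continuous_mul_log_div (β j) (hβ j)).comp (hcs j)).sub (hcs j)).add
        continuous_const
    exact ((((hfin D).sub (hfin S)).add (continuous_const.mul hkl)).add
      (continuous_const.mul (hklr.add hklc)))
  -- coercive lower bound
  obtain ⟨C, hC⟩ : ∃ C : ℝ, ∀ T : Matrix (Fin n) (Fin m) ℝ, (∀ i j, 0 ≤ T i j) →
      (∑ i, ∑ j, T i j) - C ≤ Ψ T := by
    choose c hc using fun i j => entry_lower (D i j - S i j) (Q i j) lam2 (hQ i j) hlam2
    refine ⟨∑ i, ∑ j, c i j, fun T hT => ?_⟩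
    have hτpart : 0 ≤ τ * (klVec (rowSums T) α + klVec (colSums T) β) := by
      apply mul_nonneg hτ
      have h1 := klVec_nonneg (r := rowSums T) (fun i => Finset.sum_nonneg fun j _ => hT i j) hα
      have h2 := klVec_nonneg (r := colSums T) (fun j => Finset.sum_nonneg fun i _ => hT i j) hβ
      linarith
    have hmain : (∑ i, ∑ j, T i j) - ∑ i, ∑ j, c i j ≤
        finner D T - finner S T + lam2 * klMat T Q := by
      have : finner D T - finner S T + lam2 * klMat T Q =
          ∑ i, ∑ j, ((D i j - S i j) * T i j
            + lam2 * (T i j * Real.log (T i j / Q i j) - T i j + Q i j)) := by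
        simp only [finner, klMat, Finset.mul_sum, ← Finset.sum_sub_distrib,
          ← Finset.sum_add_distrib]
        refine Finset.sum_congr rfl fun i _ => Finset.sum_congr rfl fun j _ => by ring
      rw [this, ← Finset.sum_sub_distrib]
      refine Finset.sum_le_sum fun i _ => ?_
      rw [← Finset.sum_sub_distrib]
      exact Finset.sum_le_sum fun j _ => hc i j (T i j) (hT i j)
    rw [hΨ T]; linarith
  -- existence via compactness
  set R : ℝ := |Ψ 0| + |C| + 1 with hR
  set K : Set (Matrix (Fin n) (Fin m) ℝ) := {T | ∀ i j, T i j ∈ Set.Icc (0:ℝ) R} with hK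
  have hKc : IsCompact K := by
    have : K = Set.univ.pi fun i : Fin n => Set.univ.pi fun j : Fin m => Set.Icc (0:ℝ) R := by
      ext T
      simp only [hK, Set.mem_setOf_eq]
      exact ⟨fun h i _ j _ => h i j, fun h i j => h i (Set.mem_univ i) j (Set.mem_univ j)⟩
    rw [this]
    exact isCompact_univ_pi fun i => isCompact_univ_pi fun j => isCompact_Icc
  have hR0 : (0:ℝ) ≤ R := by positivity
  have h0K : (0 : Matrix (Fin n) (Fin m) ℝ) ∈ K := by
    intro i j; simp [hR0]
  obtain ⟨T₀, hT₀K, hT₀min⟩ := hKc.exists_isMinOn ⟨0, h0K⟩ hcont.continuousOn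
  have hT₀0 : ∀ i j, 0 ≤ T₀ i j := fun i j => (hT₀K i j).1
  have hglobal : ∀ T : Matrix (Fin n) (Fin m) ℝ, (∀ i j, 0 ≤ T i j) → Ψ T₀ ≤ Ψ T := by
    intro T hT
    by_cases hTK : T ∈ K
    · exact hT₀min hTK
    · -- some entry exceeds R
      have : ∃ i j, R < T i j := by
        by_contra hcon
        push_neg at hcon
        exact hTK fun i j => ⟨hT i j, hcon i j⟩
      obtain ⟨i, j, hij⟩ := this
      have hsum : T i j ≤ ∑ i', ∑ j', T i' j' := by
        calc T i j ≤ ∑ j', T i j' :=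
              Finset.single_le_sum (fun j' _ => hT i j') (Finset.mem_univ j)
          _ ≤ ∑ i', ∑ j', T i' j' :=
              Finset.single_le_sum (f := fun i' => ∑ j', T i' j')
                (fun i' _ => Finset.sum_nonneg fun j' _ => hT i' j') (Finset.mem_univ i)
      have h1 : Ψ 0 < Ψ T := by
        have h2 := hC T hT
        have : R - C < Ψ T := by linarith
        have hC' : -|C| ≤ -C := neg_le_neg (le_abs_self C)
        calc Ψ 0 ≤ |Ψ 0| := le_abs_self _
          _ < R - |C| := by rw [hR]; linarith
          _ ≤ R - C := by linarith [le_abs_self C]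
          _ < Ψ T := this
      exact le_of_lt (lt_of_le_of_lt (hT₀min h0K) h1)
  refine ⟨T₀, ⟨hT₀0, hglobal⟩, ?_⟩
  -- uniqueness via strict convexity
  rintro T₁ ⟨hT₁0, hT₁min⟩
  by_contra hne
  have hdiff : ∃ i j, T₁ i j ≠ T₀ i j := by
    by_contra hcon
    push_neg at hcon
    exact hne (by funext i j; exact hcon i j)
  obtain ⟨i₀, j₀, hij₀⟩ := hdiff
  set M : Matrix (Fin n) (Fin m) ℝ := fun i j => (T₁ i j + T₀ i j) / 2 with hM
  have hM0 : ∀ i j, 0 ≤ M i j := fun i j => by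
    have := hT₁0 i j; have := hT₀0 i j; simp only [hM]; linarith
  -- linear part is exactly averaged
  have hfin_avg : ∀ A : Matrix (Fin n) (Fin m) ℝ,
      finner A M = (finner A T₁ + finner A T₀) / 2 := by
    intro A
    simp only [finner]
    rw [sum2_avg]
    exact Finset.sum_congr rfl fun i _ => Finset.sum_congr rfl fun j _ => by
      simp only [hM]; ring
  -- strict convexity of klMat
  have hkl_lt : klMat M Q < (klMat T₁ Q + klMat T₀ Q) / 2 := by
    simp only [klMat]
    rw [sum2_avg]
    refine Finset.sum_lt_sum (fun i _ => ?_) ⟨i₀, Finset.mem_univ i₀, ?_⟩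
    · refine Finset.sum_le_sum fun j _ => ?_
      have h := kl_term_mid (hT₁0 i j) (hT₀0 i j) (hQ i j)
      simp only [hM]; linarith
    · refine Finset.sum_lt_sum (fun j _ => ?_) ⟨j₀, Finset.mem_univ j₀, ?_⟩
      · have h := kl_term_mid (hT₁0 i₀ j) (hT₀0 i₀ j) (hQ i₀ j)
        simp only [hM]; linarith
      · have h := kl_term_mid_lt (hT₁0 i₀ j₀) (hT₀0 i₀ j₀) (hQ i₀ j₀) hij₀
        simp only [hM]; linarith
  -- convexity of the marginal KL terms
  have hrow_avg : ∀ i, rowSums M i = (rowSums T₁ i + rowSums T₀ i) / 2 := by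
    intro i
    simp only [rowSums, hM]
    rw [← Finset.sum_add_distrib, Finset.sum_div]
  have hcol_avg : ∀ j, colSums M j = (colSums T₁ j + colSums T₀ j) / 2 := by
    intro j
    simp only [colSums, hM]
    rw [← Finset.sum_add_distrib, Finset.sum_div]
  have hklr_le : klVec (rowSums M) α ≤ (klVec (rowSums T₁) α + klVec (rowSums T₀) α) / 2 := by
    simp only [klVec]
    rw [sum1_avg]
    refine Finset.sum_le_sum fun i _ => ?_
    rw [hrow_avg i]
    have h1 : 0 ≤ rowSums T₁ i := Finset.sum_nonneg fun j _ => hT₁0 i j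
    have h2 : 0 ≤ rowSums T₀ i := Finset.sum_nonneg fun j _ => hT₀0 i j
    have := kl_term_mid h1 h2 (hα i)
    linarith
  have hklc_le : klVec (colSums M) β ≤ (klVec (colSums T₁) β + klVec (colSums T₀) β) / 2 := by
    simp only [klVec]
    rw [sum1_avg]
    refine Finset.sum_le_sum fun j _ => ?_
    rw [hcol_avg j]
    have h1 : 0 ≤ colSums T₁ j := Finset.sum_nonneg fun i _ => hT₁0 i j
    have h2 : 0 ≤ colSums T₀ j := Finset.sum_nonneg fun i _ => hT₀0 i j
    have := kl_term_mid h1 h2 (hβ j)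
    linarith
  -- combine
  have hΨM : Ψ M < (Ψ T₁ + Ψ T₀) / 2 := by
    rw [hΨ M, hΨ T₁, hΨ T₀, hfin_avg D, hfin_avg S]
    have h1 : lam2 * klMat M Q < lam2 * ((klMat T₁ Q + klMat T₀ Q) / 2) :=
      mul_lt_mul_of_pos_left hkl_lt hlam2
    have h2 : τ * (klVec (rowSums M) α + klVec (colSums M) β) ≤
        τ * (((klVec (rowSums T₁) α + klVec (colSums T₁) β)
          + (klVec (rowSums T₀) α + klVec (colSums T₀) β)) / 2) := by
      apply mul_le_mul_of_nonneg_left _ hτ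
      linarith
    linarith
  have hle1 : Ψ T₁ ≤ Ψ M := hT₁min M hM0
  have hle0 : Ψ T₀ ≤ Ψ M := hglobal M hM0
  linarith
end
end
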